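/- arXiv:1203.0290 — 2 statements merged into one kernel-verified Lean document; each statement's English description precedes it below -/
import Mathlib

section
/- If the characteristic of F does not divide k!, then the k-th Pfaffian of a 2-form λ equals λ^k / k!, i.e., k! · Pf_k(λ) = λ ∧ λ ∧ ⋯ ∧ λ (k factors). -/
open ExteriorAlgebra

set_option synthInstance.maxHeartbeats 1000000

/-- Interior multiplication `ι_v` of a form (an element of the exterior algebra of the
dual space) by a vector `v`, characterized by `⟨ι_v α, β⟩ = ⟨α, v ∧ β⟩`. -/
noncomputable def iMul (F : Type*) [Field F] {V : Type*} [AddCommGroup V] [Module F V] (v : V) :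
    ExteriorAlgebra F (Module.Dual F V) →ₗ[F] ExteriorAlgebra F (Module.Dual F V) :=
  CliffordAlgebra.contractLeft (Module.Dual.eval F V v)

/-!
By induction on `k`, both sides of `k! • Pf_k(λ) = λ ^ k` lie in degree `2k`, so it suffices to
compare their contractions with every vector `v`. Since `λ` is a 2-form, `ι_v` acts on products
`λ * y` as a derivation and `ι_v λ` is a 1-form commuting with `λ`, whence
`ι_v (λ ^ (k + 1)) = (k + 1) • (ι_v λ * λ ^ k)`; this is `ι_v ((k + 1)! • Pf_{k+1}(λ))` by the
recursion and the induction hypothesis.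

A form `x` of positive degree all of whose contractions vanish is zero: adjoining basis vectors
one at a time, write `x = a + e ∧ c` with `a`, `c` built from the earlier basis vectors; contracting
with the coordinate functional of `e` gives `c = 0`.
-/

namespace Submodule

variable {R A : Type*} [CommSemiring R] [Semiring A] [Algebra R A]

theorem sup_pow_succ_le_of_mul_le_of_mul_self_eq_bot {P E : Submodule R A}
    (hPE : P * E ≤ E * P) (hE : E * E = ⊥) (n : ℕ) :
    (P ⊔ E) ^ (n + 1) ≤ P ^ (n + 1) ⊔ E * P ^ n := by
  induction n with
  | zero => simp
  | succ n ih =>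
    calc (P ⊔ E) ^ (n + 2) ≤ (P ⊔ E) * (P ^ (n + 1) ⊔ E * P ^ n) := by
          rw [pow_succ' _ (n + 1)]; exact mul_le_mul_right ih _
      _ = P * P ^ (n + 1) ⊔ E * P ^ (n + 1) ⊔ (P * E * P ^ n ⊔ E * E * P ^ n) := by
          simp only [sup_mul, mul_sup, mul_assoc]
      _ ≤ P ^ (n + 2) ⊔ E * P ^ (n + 1) := by
          rw [hE, bot_mul, sup_bot_eq, ← pow_succ']
          refine sup_le le_rfl (le_sup_of_le_right ?_)
          calc P * E * P ^ n ≤ E * P * P ^ n := mul_le_mul_left hPE _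
            _ = E * P ^ (n + 1) := by rw [mul_assoc, ← pow_succ']

end Submodule

namespace ExteriorAlgebra

variable {R M : Type*} [CommRing R] [AddCommGroup M] [Module R M]

theorem ι_mul_ι_comm (x y : M) : ι R x * ι R y = -(ι R y * ι R x) :=
  eq_neg_of_add_eq_zero_left (ι_add_mul_swap x y)

theorem exists_eq_add_ι_mul_of_mem_pow (N : Submodule R M) (e : M) {n : ℕ}
    {x : ExteriorAlgebra R M} (hx : x ∈ ((Submodule.span R {e} ⊔ N).map (ι R)) ^ (n + 1)) :
    ∃ a ∈ N.map (ι R) ^ (n + 1), ∃ c ∈ N.map (ι R) ^ n, x = a + ι R e * c := by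
  set P := N.map (ι R)
  set E := Submodule.span R {ι R e}
  have hPE : P * E ≤ E * P := by
    refine Submodule.mul_le.mpr fun p hp q hq => ?_
    obtain ⟨w, hw, rfl⟩ := hp
    obtain ⟨t, rfl⟩ := Submodule.mem_span_singleton.mp hq
    rw [mul_smul_comm, ι_mul_ι_comm, ← mul_neg, ← mul_smul_comm, ← map_neg]
    exact Submodule.mul_mem_mul (Submodule.mem_span_singleton_self _)
      (Submodule.smul_mem _ _ ⟨-w, neg_mem hw, rfl⟩)
  have hE : E * E = ⊥ := by
    rw [Submodule.span_mul_span, Set.singleton_mul_singleton, ι_sq_zero,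
      Submodule.span_zero_singleton]
  rw [Submodule.map_sup, Submodule.map_span, Set.image_singleton, sup_comm] at hx
  obtain ⟨a, ha, y, hy, rfl⟩ :=
    Submodule.mem_sup.mp (Submodule.sup_pow_succ_le_of_mul_le_of_mul_self_eq_bot hPE hE n hx)
  obtain ⟨c, hc, rfl⟩ := Submodule.mem_span_singleton_mul.mp hy
  exact ⟨a, ha, c, hc, rfl⟩

theorem contractLeft_eq_zero_of_mem_pow {N : Submodule R M} {d : Module.Dual R M}
    (hd : N ≤ LinearMap.ker d) {n : ℕ} {x : ExteriorAlgebra R M} (hx : x ∈ N.map (ι R) ^ n) :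
    CliffordAlgebra.contractLeft d x = 0 := by
  induction hx using Submodule.pow_induction_on_left' with
  | algebraMap r => exact CliffordAlgebra.contractLeft_algebraMap _ _ r
  | add x y i _ _ hx hy => rw [map_add, hx, hy, add_zero]
  | mem_mul m hm i y _ hy =>
    obtain ⟨w, hw, rfl⟩ := hm
    rw [CliffordAlgebra.contractLeft_ι_mul, hy, LinearMap.mem_ker.mp (hd hw), zero_smul,
      mul_zero, sub_zero]

theorem eq_zero_of_forall_contractLeft_eq_zero [Module.Free R M] [Module.Finite R M] {n : ℕ}
    (hn : n ≠ 0) {x : ExteriorAlgebra R M} (hx : x ∈ ⋀[R]^n M)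
    (h : ∀ d : Module.Dual R M, CliffordAlgebra.contractLeft d x = 0) : x = 0 := by
  obtain ⟨n, rfl⟩ := Nat.exists_eq_succ_of_ne_zero hn
  let b := Module.Free.chooseBasis R M
  suffices ∀ s : Finset (Module.Free.ChooseBasisIndex R M),
      ∀ x ∈ (Submodule.span R (b '' s)).map (ι R) ^ (n + 1),
      (∀ d : Module.Dual R M, CliffordAlgebra.contractLeft d x = 0) → x = 0 by
    refine this Finset.univ x ?_ h
    rwa [Finset.coe_univ, Set.image_univ, b.span_eq, Submodule.map_top]
  intro s
  induction s using Finset.induction_on with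
  | empty =>
    intro x hx _
    rwa [Finset.coe_empty, Set.image_empty, Submodule.span_empty, Submodule.map_bot,
      Submodule.bot_pow n.succ_ne_zero, Submodule.mem_bot] at hx
  | insert i s hi ih =>
    intro x hx hx0
    rw [Finset.coe_insert, Set.image_insert_eq, Submodule.span_insert] at hx
    obtain ⟨a, ha, c, hc, rfl⟩ := exists_eq_add_ι_mul_of_mem_pow _ _ hx
    have hker : Submodule.span R (b '' s) ≤ LinearMap.ker (b.coord i) := by
      refine Submodule.span_le.mpr ?_
      rintro _ ⟨j, hj, rfl⟩
      have : j ≠ i := by rintro rfl; exact hi hj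
      simp [Module.Basis.coord_apply, this]
    have hc0 : c = 0 := by
      simpa [CliffordAlgebra.contractLeft_ι_mul, contractLeft_eq_zero_of_mem_pow hker ha,
        contractLeft_eq_zero_of_mem_pow hker hc] using hx0 (b.coord i)
    subst hc0
    simp only [mul_zero, add_zero] at hx0 ⊢
    exact ih a ha hx0

@[elab_as_elim]
theorem exteriorPower_two_induction_on {C : ExteriorAlgebra R M → Prop}
    {l : ExteriorAlgebra R M} (hl : l ∈ ⋀[R]^2 M) (mul : ∀ u w : M, C (ι R u * ι R w))
    (add : ∀ x y, C x → C y → C (x + y)) : C l := by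
  rw [exteriorPower, pow_two] at hl
  refine Submodule.mul_induction_on hl ?_ add
  rintro _ ⟨u, rfl⟩ _ ⟨w, rfl⟩
  exact mul u w

theorem contractLeft_mem_range_ι_of_mem_exteriorPower_two {l : ExteriorAlgebra R M}
    (hl : l ∈ ⋀[R]^2 M) (d : Module.Dual R M) :
    CliffordAlgebra.contractLeft d l ∈ LinearMap.range (ι R) := by
  refine exteriorPower_two_induction_on hl (fun u w => ?_) fun x y hx hy => ?_
  · refine ⟨d u • w - d w • u, ?_⟩
    rw [CliffordAlgebra.contractLeft_ι_mul, CliffordAlgebra.contractLeft_ι, ← Algebra.commutes,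
      ← Algebra.smul_def, map_sub, map_smul, map_smul]
  · rw [map_add]; exact add_mem hx hy

theorem commute_ι_of_mem_exteriorPower_two {l : ExteriorAlgebra R M} (hl : l ∈ ⋀[R]^2 M)
    (v : M) : Commute l (ι R v) := by
  refine exteriorPower_two_induction_on hl (fun u w => ?_) fun x y hx hy => ?_
  · unfold Commute SemiconjBy
    rw [mul_assoc, ι_mul_ι_comm w v, mul_neg, ← mul_assoc, ι_mul_ι_comm u v, neg_mul, neg_neg,
      mul_assoc]
  · exact hx.add_left hy

theorem contractLeft_mul_of_mem_exteriorPower_two {l : ExteriorAlgebra R M}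
    (hl : l ∈ ⋀[R]^2 M) (d : Module.Dual R M) (y : ExteriorAlgebra R M) :
    CliffordAlgebra.contractLeft d (l * y) =
      CliffordAlgebra.contractLeft d l * y + l * CliffordAlgebra.contractLeft d y := by
  refine exteriorPower_two_induction_on hl (fun u w => ?_) fun x y hx hy => ?_
  · simp only [mul_assoc, CliffordAlgebra.contractLeft_ι_mul, CliffordAlgebra.contractLeft_ι,
      mul_sub, sub_mul, Algebra.smul_def]
    abel
  · rw [add_mul, map_add, hx, hy, map_add, add_mul, add_mul]; abel

theorem contractLeft_pow_succ_of_mem_exteriorPower_two {l : ExteriorAlgebra R M}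
    (hl : l ∈ ⋀[R]^2 M) (d : Module.Dual R M) (k : ℕ) :
    CliffordAlgebra.contractLeft d (l ^ (k + 1)) =
      (k + 1) • (CliffordAlgebra.contractLeft d l * l ^ k) := by
  induction k with
  | zero => simp
  | succ k ih =>
    obtain ⟨v, hv⟩ := contractLeft_mem_range_ι_of_mem_exteriorPower_two hl d
    have hcomm : Commute l (CliffordAlgebra.contractLeft d l) :=
      hv ▸ commute_ι_of_mem_exteriorPower_two hl v
    rw [pow_succ' l (k + 1), contractLeft_mul_of_mem_exteriorPower_two hl, ih, mul_smul_comm,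
      ← mul_assoc, hcomm.eq, mul_assoc, ← pow_succ', succ_nsmul' _ (k + 1)]

end ExteriorAlgebra

section iMul

variable {F V : Type*} [Field F] [AddCommGroup V] [Module F V]

theorem iMul_pow_succ_of_mem_exteriorPower_two {l : ExteriorAlgebra F (Module.Dual F V)}
    (hl : l ∈ ⋀[F]^2 (Module.Dual F V)) (v : V) (k : ℕ) :
    iMul F v (l ^ (k + 1)) = (k + 1) • (iMul F v l * l ^ k) :=
  contractLeft_pow_succ_of_mem_exteriorPower_two hl _ k

theorem eq_zero_of_forall_iMul_eq_zero [FiniteDimensional F V] {n : ℕ} (hn : n ≠ 0)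
    {x : ExteriorAlgebra F (Module.Dual F V)} (hx : x ∈ ⋀[F]^n (Module.Dual F V))
    (h : ∀ v : V, iMul F v x = 0) : x = 0 := by
  refine eq_zero_of_forall_contractLeft_eq_zero hn hx fun d => ?_
  obtain ⟨v, rfl⟩ := (Module.evalEquiv F V).surjective d
  exact h v

end iMul

theorem pfaffian_eq_pow_div_factorial_general (F : Type*) [Field F] (V : Type*) [AddCommGroup V]
    [Module F V] [FiniteDimensional F V]
    (Pf : ExteriorAlgebra F (Module.Dual F V) → ℕ → ExteriorAlgebra F (Module.Dual F V))
    (hPf0 : ∀ l, Pf l 0 = 1)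
    (hPfmem : ∀ l ∈ ⋀[F]^2 (Module.Dual F V), ∀ k : ℕ, 1 ≤ k →
      Pf l k ∈ ⋀[F]^(2 * k) (Module.Dual F V))
    (hPf : ∀ l ∈ ⋀[F]^2 (Module.Dual F V), ∀ (k : ℕ) (v : V),
      iMul F v (Pf l (k + 1)) = iMul F v l * Pf l k)
    (lam : ExteriorAlgebra F (Module.Dual F V))
    (hlam2 : lam ∈ ⋀[F]^2 (Module.Dual F V)) (k : ℕ) :
    (Nat.factorial k : F) • Pf lam k = lam ^ k := by
  induction k with
  | zero => simp [hPf0]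
  | succ k ih =>
    have hpow : lam ^ (k + 1) ∈ ⋀[F]^(2 * (k + 1)) (Module.Dual F V) := by
      rw [exteriorPower, pow_mul]; exact Submodule.pow_mem_pow _ hlam2 _
    rw [← sub_eq_zero]
    refine eq_zero_of_forall_iMul_eq_zero (by omega)
      (sub_mem (Submodule.smul_mem _ _ (hPfmem lam hlam2 _ k.succ_pos)) hpow) fun v => ?_
    rw [map_sub, map_smul, hPf lam hlam2, iMul_pow_succ_of_mem_exteriorPower_two hlam2,
      Nat.factorial_succ, Nat.cast_mul, mul_smul, ← mul_smul_comm, ih, Nat.cast_smul_eq_nsmul,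
      sub_self]

/-- If the characteristic of `F` does not divide `k!` (i.e. `k! ≠ 0` in `F`),
then `k! • Pf_k(λ) = λ^k` (the `k`-fold wedge power of `λ`). -/
theorem pfaffian_eq_pow_div_factorial (F : Type*) [Field F] (V : Type*) [AddCommGroup V]
    [Module F V] [FiniteDimensional F V]
    (Pf : ExteriorAlgebra F (Module.Dual F V) → ℕ → ExteriorAlgebra F (Module.Dual F V))
    (hPf0 : ∀ l, Pf l 0 = 1)
    (hPfmem : ∀ l ∈ ⋀[F]^2 (Module.Dual F V), ∀ k : ℕ, 1 ≤ k →
      Pf l k ∈ ⋀[F]^(2 * k) (Module.Dual F V))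
    (hPf : ∀ l ∈ ⋀[F]^2 (Module.Dual F V), ∀ (k : ℕ) (v : V),
      iMul F v (Pf l (k + 1)) = iMul F v l * Pf l k)
    (lam : ExteriorAlgebra F (Module.Dual F V))
    (hlam2 : lam ∈ ⋀[F]^2 (Module.Dual F V)) (k : ℕ)
    (hchar : (Nat.factorial k : F) ≠ 0) :
    (Nat.factorial k : F) • Pf lam k = lam ^ k :=
  pfaffian_eq_pow_div_factorial_general F V Pf hPf0 hPfmem hPf lam hlam2 k
end

section
/- Let ω be a degenerate 3-form on F_q^m with r-dimensional radical, and ω̃ its (non-degenerate) restriction to a complement of the radical. Then |Aut(ω)| = |Aut(ω̃)| · |GL(r, F_q)| · q^{r(m−r)}, where Aut(ω) = {g ∈ GL(m, F_q) : ω(gv_1, gv_2, gv_3) = ω(v_1,v_2,v_3) for all v_1,v_2,v_3}. -/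
/-!
The radical `K = ker ω.curryLeft` is preserved by every automorphism `g` of `ω`, and `ω` only
sees the `W`-components of its arguments. Hence `g` is block upper triangular with respect to
`V = K ⊕ W`, with diagonal blocks `a ∈ GL(W)`, `d ∈ GL(K)` and off-diagonal block `b : W → K`,
and `g` preserves `ω` exactly when `a` preserves `ω̃`; the blocks `d` and `b` are arbitrary.
-/

open LinearMap (ker ofIsCompl)

namespace Submodule

variable {R M : Type*} [Ring R] [AddCommGroup M] [Module R M] {K W : Submodule R M}
  (h : IsCompl K W)

/-- The block matrix `[[d, b], [0, a]]` with respect to `M = K ⊕ W`. -/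
noncomputable def blockTriangularEquiv (a : W ≃ₗ[R] W) (d : K ≃ₗ[R] K) (b : W →ₗ[R] K) :
    M ≃ₗ[R] M :=
  .ofLinearMap (ofIsCompl h (K.subtype ∘ₗ d) (K.subtype ∘ₗ b + W.subtype ∘ₗ a))
    (ofIsCompl h (K.subtype ∘ₗ d.symm)
      (W.subtype ∘ₗ a.symm - K.subtype ∘ₗ d.symm ∘ₗ b ∘ₗ a.symm))
    (LinearMap.ext_on_codisjoint h.codisjoint
      (fun x hx => by lift x to K using hx; simp)
      (fun x hx => by lift x to W using hx; simp))
    (LinearMap.ext_on_codisjoint h.codisjoint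
      (fun x hx => by lift x to K using hx; simp)
      (fun x hx => by lift x to W using hx; simp))

@[simp]
theorem blockTriangularEquiv_apply_left (a : W ≃ₗ[R] W) (d : K ≃ₗ[R] K) (b : W →ₗ[R] K)
    (x : K) : blockTriangularEquiv h a d b x = d x := by
  simp [blockTriangularEquiv]

@[simp]
theorem blockTriangularEquiv_apply_right (a : W ≃ₗ[R] W) (d : K ≃ₗ[R] K) (b : W →ₗ[R] K)
    (w : W) : blockTriangularEquiv h a d b w = (b w : M) + a w := by
  simp [blockTriangularEquiv]

theorem map_blockTriangularEquiv (a : W ≃ₗ[R] W) (d : K ≃ₗ[R] K) (b : W →ₗ[R] K) :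
    K.map (blockTriangularEquiv h a d b : M →ₗ[R] M) = K := by
  ext x
  constructor
  · rintro ⟨y, hy, rfl⟩
    lift y to K using hy
    simp
  · intro hx
    exact ⟨d.symm ⟨x, hx⟩, by simp⟩

/-- The `W`-block is the automorphism induced on `M ⧸ K ≃ W`. -/
noncomputable def stabilizerEquivOfIsCompl :
    {g : M ≃ₗ[R] M // K.map (g : M →ₗ[R] M) = K} ≃
      (W ≃ₗ[R] W) × (K ≃ₗ[R] K) × (W →ₗ[R] K) where
  toFun g :=
    (((quotientEquivOfIsCompl K W h).symm.trans (Quotient.equiv K K g.1 g.2)).trans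
        (quotientEquivOfIsCompl K W h),
      g.1.ofSubmodules K K g.2,
      K.projectionOnto W h ∘ₗ (g.1 : M →ₗ[R] M) ∘ₗ W.subtype)
  invFun p := ⟨blockTriangularEquiv h p.1 p.2.1 p.2.2, map_blockTriangularEquiv h _ _ _⟩
  left_inv g := by
    refine Subtype.ext (LinearEquiv.toLinearMap_injective (LinearMap.ext_on_codisjoint
      h.codisjoint (fun x hx => ?_) (fun x hx => ?_)))
    · lift x to K using hx
      simp
    · lift x to W using hx
      simp [quotientEquivOfIsCompl_apply_mk, projection_add_projection_eq_self]
  right_inv p := by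
    refine Prod.ext ?_ (Prod.ext ?_ ?_)
    · ext w
      simp [quotientEquivOfIsCompl_apply_mk]
    · ext x
      simp
    · ext w
      simp

theorem stabilizerEquivOfIsCompl_fst_apply (g : {g : M ≃ₗ[R] M // K.map (g : M →ₗ[R] M) = K})
    (w : W) : ((stabilizerEquivOfIsCompl h g).1 w : M) = W.projection K h.symm (g.1 w) :=
  rfl

end Submodule

namespace AlternatingMap

variable {R M N : Type*} [CommRing R] [AddCommGroup M] [Module R M] [AddCommGroup N] [Module R N]

def autGroup {ι : Type*} (f : M [⋀^ι]→ₗ[R] N) : Subgroup (M ≃ₗ[R] M) where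
  carrier := {g | ∀ v, f (g ∘ v) = f v}
  one_mem' _ := rfl
  mul_mem' {g h} hg hh v := (hg (h ∘ v)).trans (hh v)
  inv_mem' {g} hg v := by
    simpa [Function.comp_def] using (hg (⇑g⁻¹ ∘ v)).symm

theorem mem_autGroup_iff_forall₃ {f : M [⋀^Fin 3]→ₗ[R] N} {g : M ≃ₗ[R] M} :
    g ∈ f.autGroup ↔ ∀ v₁ v₂ v₃, f ![g v₁, g v₂, g v₃] = f ![v₁, v₂, v₃] := by
  have comp_vec : ∀ v₁ v₂ v₃, ⇑g ∘ ![v₁, v₂, v₃] = ![g v₁, g v₂, g v₃] := fun _ _ _ => by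
    ext i; fin_cases i <;> rfl
  simp [autGroup, Fin.forall_fin_succ_pi, Fin.forall_fin_zero_pi, comp_vec]

variable {n : ℕ} (f : M [⋀^Fin (n + 1)]→ₗ[R] N)

theorem map_eq_zero_of_mem_ker_curryLeft {v : Fin (n + 1) → M} {i : Fin (n + 1)}
    (hi : v i ∈ ker f.curryLeft) : f v = 0 := by
  have : f (v ∘ Equiv.swap 0 i) = 0 := by
    rw [← Fin.cons_self_tail (v ∘ Equiv.swap 0 i)]
    exact DFunLike.congr_fun hi _
  rwa [map_perm, smul_eq_zero_iff_eq] at this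

theorem map_projection_eq_self {W : Submodule R M} (hW : IsCompl (ker f.curryLeft) W)
    (v : Fin (n + 1) → M) : f (fun i => W.projection _ hW.symm (v i)) = f v := by
  classical
  have hv : v = (fun i => W.projection _ hW.symm (v i)) +
      (fun i => (ker f.curryLeft).projection W hW (v i)) :=
    funext fun i => (Submodule.projection_add_projection_eq_self hW.symm (v i)).symm
  conv_rhs => rw [hv, map_add_univ]
  rw [Finset.sum_eq_single_of_mem _ (Finset.mem_univ Finset.univ), Finset.piecewise_univ]
  intro s _ hs
  obtain ⟨i, hi⟩ : ∃ i, i ∉ s := by simpa [Finset.eq_univ_iff_forall] using hs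
  apply map_eq_zero_of_mem_ker_curryLeft f (i := i)
  simp [Finset.piecewise_eq_of_notMem _ _ _ hi]

theorem map_ker_curryLeft_of_mem_autGroup {g : M ≃ₗ[R] M} (hg : g ∈ f.autGroup) :
    (ker f.curryLeft).map (g : M →ₗ[R] M) = ker f.curryLeft := by
  have mapsTo : ∀ g ∈ f.autGroup, ∀ x ∈ ker f.curryLeft, g x ∈ ker f.curryLeft := by
    intro g hg x hx
    ext t
    have : ⇑g ∘ Matrix.vecCons x (⇑g⁻¹ ∘ t) = Matrix.vecCons (g x) t := by
      ext i; refine Fin.cases ?_ (fun j => ?_) i <;> simp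
    rw [curryLeft_apply_apply, ← this, hg]
    exact f.map_eq_zero_of_mem_ker_curryLeft (i := 0) hx
  refine le_antisymm (Submodule.map_le_iff_le_comap.2 (mapsTo g hg)) fun x hx => ?_
  exact ⟨g⁻¹ x, mapsTo _ (inv_mem hg) x hx, by simp⟩

theorem mem_autGroup_iff_of_isCompl {W : Submodule R M} (hW : IsCompl (ker f.curryLeft) W)
    {g : M ≃ₗ[R] M} (hg : (ker f.curryLeft).map (g : M →ₗ[R] M) ≤ ker f.curryLeft)
    {a : W ≃ₗ[R] W} (ha : ∀ w : W, (a w : M) = W.projection _ hW.symm (g w)) :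
    g ∈ f.autGroup ↔ a ∈ (f.compLinearMap W.subtype).autGroup := by
  set P := W.projection _ hW.symm
  have hP : ∀ x, P (g (P x)) = P (g x) := by
    intro x
    rw [eq_comm, ← sub_eq_zero, ← map_sub, ← map_sub, Submodule.projection_apply_eq_zero_iff]
    exact hg (Submodule.mem_map_of_mem (Submodule.sub_projection_mem hW.symm x))
  have key : ∀ v : Fin (n + 1) → W,
      f.compLinearMap W.subtype (a ∘ v) = f (fun i => P (g (v i))) := by
    intro v
    simp only [compLinearMap_apply, Submodule.subtype_apply, Function.comp_apply, ha]
  constructor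
  · intro hg' v
    rw [key, f.map_projection_eq_self hW]
    exact hg' (W.subtype ∘ v)
  · intro ha' v
    calc f (g ∘ v) = f (fun i => P (g (v i))) := (f.map_projection_eq_self hW _).symm
      _ = f (fun i => P (g (W.projectionOnto _ hW.symm (v i)))) := by
          simp only [Submodule.coe_projectionOnto_apply]
          exact congrArg f (funext fun i => (hP (v i)).symm)
      _ = f.compLinearMap W.subtype (a ∘ fun i => W.projectionOnto _ hW.symm (v i)) :=
          (key _).symm
      _ = f v := by rw [ha']; exact f.map_projection_eq_self hW v

noncomputable def autGroupEquivOfIsCompl {W : Submodule R M} (hW : IsCompl (ker f.curryLeft) W) :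
    f.autGroup ≃ (f.compLinearMap W.subtype).autGroup ×
      (ker f.curryLeft ≃ₗ[R] ker f.curryLeft) × (W →ₗ[R] ker f.curryLeft) :=
  (Equiv.subtypeSubtypeEquivSubtype (f.map_ker_curryLeft_of_mem_autGroup ·)).symm.trans <|
    ((Submodule.stabilizerEquivOfIsCompl hW).subtypeEquiv fun g =>
      f.mem_autGroup_iff_of_isCompl hW g.2.le
        (Submodule.stabilizerEquivOfIsCompl_fst_apply hW g)).trans
    Equiv.prodSubtypeFstEquivSubtypeProd

end AlternatingMap

/-- For a degenerate 3-form `ω` on `F_q^m` with `r`-dimensional radical and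
non-degenerate restriction `ω̃` to a complement `W` of the radical,
`|Aut(ω)| = |Aut(ω̃)| · |GL(r, F_q)| · q^{r(m−r)}`, where `Aut` denotes the stabilizer under
the pullback action of the general linear group. -/
theorem degenerate_three_form_aut_card (F : Type*) [Field F] [Fintype F] (q m r : ℕ)
    (hq : Fintype.card F = q)
    (ω : (Fin m → F) [⋀^Fin 3]→ₗ[F] F)
    (hr : Module.finrank F (LinearMap.ker ω.curryLeft) = r)
    (W : Submodule F (Fin m → F))
    (hW : IsCompl (LinearMap.ker ω.curryLeft) W) :
    Nat.card {g : (Fin m → F) ≃ₗ[F] (Fin m → F) //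
        ∀ v₁ v₂ v₃, ω ![g v₁, g v₂, g v₃] = ω ![v₁, v₂, v₃]}
      = Nat.card {g : W ≃ₗ[F] W // ∀ w₁ w₂ w₃,
          ω.compLinearMap W.subtype ![g w₁, g w₂, g w₃] =
            ω.compLinearMap W.subtype ![w₁, w₂, w₃]}
        * Nat.card (Matrix.GeneralLinearGroup (Fin r) F) * q ^ (r * (m - r)) := by
  have hWr : Module.finrank F W = m - r := by
    have := Submodule.finrank_add_eq_of_isCompl hW
    rw [hr, Module.finrank_fin_fun] at this
    omega
  have card_GL : Nat.card (ker ω.curryLeft ≃ₗ[F] ker ω.curryLeft) =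
      Nat.card (Matrix.GeneralLinearGroup (Fin r) F) :=
    Nat.card_congr ((Matrix.GeneralLinearGroup.toLin' (Module.finBasisOfFinrankEq F _ hr)).trans
      (LinearMap.GeneralLinearGroup.generalLinearEquiv F _)).toEquiv.symm
  have card_hom : Nat.card (W →ₗ[F] ker ω.curryLeft) = q ^ (r * (m - r)) := by
    rw [Module.natCard_eq_pow_finrank (K := F), Module.finrank_linearMap, hWr, hr,
      Nat.card_eq_fintype_card, hq, mul_comm]
  rw [← Nat.card_congr (Equiv.subtypeEquivRight fun _ => ω.mem_autGroup_iff_forall₃),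
    ← Nat.card_congr (Equiv.subtypeEquivRight fun _ =>
      (ω.compLinearMap W.subtype).mem_autGroup_iff_forall₃),
    Nat.card_congr (ω.autGroupEquivOfIsCompl hW), Nat.card_prod, Nat.card_prod, card_GL,
    card_hom, mul_assoc]
end
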